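/- Formal power series r-generating function (Theorem 2.16 with Y = 1): over a commutative ℚ-algebra with parameters x, λ and positive integers m, r, define e_λ^r(t) = Σ_{n≥0} (r)_{n,λ} t^n/n! and W^{(r)}_{m,λ}(n,k) by e_λ^r(t)·(1/k!)((e_λ^m(t)−1)/m)^k = Σ_{n≥k} W^{(r)}_{m,λ}(n,k) t^n/n!. Then Σ_{n≥0} (Σ_{k=0}^{n} W^{(r)}_{m,λ}(n,k) x^k) t^n/n! = e_λ^r(t) · exp(x(e_λ^m(t)−1)/m) as formal power series in t. -/

import Mathlib

/-- The degenerate falling factorial `(x)_{n,λ} = x(x-λ)⋯(x-(n-1)λ)`, with `(x)_{0,λ} = 1`. -/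
def degFall {R : Type*} [CommRing R] (x lam : R) (n : ℕ) : R :=
  ∏ i ∈ Finset.range n, (x - (i : R) * lam)

/-- The degenerate exponential `e_λ^a(t) = Σ_{n≥0} (a)_{n,λ} tⁿ/n!` as a formal power series. -/
noncomputable def degExpPS (R : Type*) [CommRing R] [Algebra ℚ R] (a lam : R) : PowerSeries R :=
  PowerSeries.mk fun n => ((n.factorial : ℚ)⁻¹) • degFall a lam n

/-- The formal exponential `exp f = Σ_{k≥0} fᵏ/k!` of a power series `f` with zero constant
term (coefficientwise, only `k ≤ n` contributes to the `n`-th coefficient). -/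
noncomputable def expPS (R : Type*) [CommRing R] [Algebra ℚ R] (f : PowerSeries R) :
    PowerSeries R :=
  PowerSeries.mk fun n =>
    ∑ k ∈ Finset.range (n + 1), ((k.factorial : ℚ)⁻¹) • PowerSeries.coeff n (f ^ k)

/-!
Expanding the exponential, the `n`-th coefficient of `e_λ^r(t) · exp(x g(t))`, where
`g = (e_λ^m(t) - 1)/m` has zero constant term, is `Σ_{k ≤ n} xᵏ/k! · [tⁿ] (e_λ^r(t) gᵏ)`:
terms with `k > n` vanish because `gᵏ` is divisible by `tᵏ`. By the defining relation of
`W^{(r)}_{m,λ}(n,k)`, each `[tⁿ] (e_λ^r(t) gᵏ)/k!` is `W^{(r)}_{m,λ}(n,k)/n!`.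
-/

open PowerSeries Finset

section

variable {R : Type*} [CommRing R] [Algebra ℚ R]

theorem constantCoeff_degExpPS (a lam : R) : constantCoeff (degExpPS R a lam) = 1 := by
  simp [degExpPS, degFall, ← coeff_zero_eq_constantCoeff_apply]

omit [Algebra ℚ R] in
theorem coeff_pow_eq_zero_of_lt {f : PowerSeries R} (hf : constantCoeff f = 0) {n k : ℕ}
    (h : n < k) : coeff n (f ^ k) = 0 :=
  coeff_of_lt_order n <| (Nat.cast_lt.mpr h).trans_le (le_order_pow_of_constantCoeff_eq_zero k hf)

theorem coeff_expPS_eq_sum_of_le {f : PowerSeries R} (hf : constantCoeff f = 0) {p N : ℕ}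
    (hp : p ≤ N) :
    coeff p (expPS R f) = ∑ k ∈ range (N + 1), ((k.factorial : ℚ)⁻¹) • coeff p (f ^ k) := by
  rw [expPS, coeff_mk]
  refine sum_subset (range_subset_range.mpr (by omega)) fun k _ hk => ?_
  rw [coeff_pow_eq_zero_of_lt hf (by simpa using hk), smul_zero]

theorem coeff_mul_expPS {f : PowerSeries R} (hf : constantCoeff f = 0) (e : PowerSeries R)
    (n : ℕ) :
    coeff n (e * expPS R f) =
      ∑ k ∈ range (n + 1), ((k.factorial : ℚ)⁻¹) • coeff n (e * f ^ k) := by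
  have htrunc : coeff n (e * expPS R f) =
      coeff n (e * ∑ k ∈ range (n + 1), ((k.factorial : ℚ)⁻¹) • f ^ k) := by
    simp only [coeff_mul, map_sum, coeff_smul]
    refine sum_congr rfl fun p hp => ?_
    rw [coeff_expPS_eq_sum_of_le hf (HasAntidiagonal.antidiagonal.snd_le hp)]
  simp only [htrunc, mul_sum, mul_smul_comm, map_sum, coeff_smul]

end

theorem degRDowling_generating_function_general (R : Type*) [CommRing R] [Algebra ℚ R]
    (x lam : R) (m r : ℕ) (W : ℕ → ℕ → R)
    (hW : ∀ k : ℕ,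
      ((k.factorial : ℚ)⁻¹) •
          (degExpPS R (r : R) lam * (((m : ℚ)⁻¹) • (degExpPS R (m : R) lam - 1)) ^ k) =
        PowerSeries.mk fun n => if k ≤ n then ((n.factorial : ℚ)⁻¹) • W n k else 0) :
    (PowerSeries.mk fun n =>
        ((n.factorial : ℚ)⁻¹) • ∑ k ∈ Finset.range (n + 1), W n k * x ^ k) =
      degExpPS R (r : R) lam *
        expPS R (PowerSeries.C x * (((m : ℚ)⁻¹) • (degExpPS R (m : R) lam - 1))) := by
  set e := degExpPS R (r : R) lam
  set g : PowerSeries R := ((m : ℚ)⁻¹) • (degExpPS R (m : R) lam - 1)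
  have hg : constantCoeff (C x * g) = 0 := by
    simp [g, constantCoeff_degExpPS]
  ext n
  rw [coeff_mul_expPS hg, coeff_mk, smul_sum]
  refine sum_congr rfl fun k hk => ?_
  have hWnk : ((k.factorial : ℚ)⁻¹) • coeff n (e * g ^ k) = ((n.factorial : ℚ)⁻¹) • W n k := by
    rw [← coeff_smul, hW k, coeff_mk, if_pos (Nat.lt_succ_iff.mp (mem_range.mp hk))]
  rw [mul_pow, ← map_pow, mul_left_comm, coeff_C_mul, ← mul_smul_comm _ (x ^ k),
    hWnk, mul_smul_comm, mul_comm (W n k)]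

/-- Generating function of the degenerate r-Dowling polynomials: if `W^{(r)}_{m,λ}(n,k)` are
defined by `e_λ^r(t)·(1/k!)((e_λ^m(t)−1)/m)ᵏ = Σ_{n≥k} W^{(r)}_{m,λ}(n,k) tⁿ/n!`, then
`Σ_{n≥0} (Σ_{k=0}^n W^{(r)}_{m,λ}(n,k) xᵏ) tⁿ/n! = e_λ^r(t)·exp(x(e_λ^m(t)−1)/m)`. -/
theorem degRDowling_generating_function (R : Type*) [CommRing R] [Algebra ℚ R]
    (x lam : R) (m r : ℕ) (hm : 0 < m) (hr : 0 < r) (W : ℕ → ℕ → R)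
    (hW : ∀ k : ℕ,
      ((k.factorial : ℚ)⁻¹) •
          (degExpPS R (r : R) lam * (((m : ℚ)⁻¹) • (degExpPS R (m : R) lam - 1)) ^ k) =
        PowerSeries.mk fun n => if k ≤ n then ((n.factorial : ℚ)⁻¹) • W n k else 0) :
    (PowerSeries.mk fun n =>
        ((n.factorial : ℚ)⁻¹) • ∑ k ∈ Finset.range (n + 1), W n k * x ^ k) =
      degExpPS R (r : R) lam *
        expPS R (PowerSeries.C x * (((m : ℚ)⁻¹) • (degExpPS R (m : R) lam - 1))) :=
  degRDowling_generating_function_general R x lam m r W hW
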